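/- arXiv:1806.05878 — 2 statements merged into one kernel-verified Lean document; each statement's English description precedes it below -/
import Mathlib

section
/- Let n ≥ 1, k ≥ 2, q = 2^k, let s ≥ 0 be an integer, and let f : 𝔽₂ⁿ → ℤ_q be an s-plateaued generalized Boolean function. Then for every c ∈ 𝔽₂^{k−1} and every u ∈ 𝔽₂ⁿ, |W_{f_c}(u)| ∈ {0, 2^{(n+s)/2}} if n + s is even, and |W_{f_c}(u)| ∈ {0, 2^{(n+s+1)/2}} if n + s is odd; that is, each component f_c is an s-plateaued Boolean function if n + s is even, and an (s+1)-plateaued Boolean function if n + s is odd. -/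
open scoped BigOperators

/-- The primitive `q`-th complex root of unity `ζ_q = e^{2πi/q}`. -/
noncomputable def zetaQ (q : ℕ) : ℂ := Complex.exp (2 * Real.pi * Complex.I / q)

/-- The generalized Walsh–Hadamard transform of `f : 𝔽₂ⁿ → ℤ_q`. -/
noncomputable def gWHT {n : ℕ} (q : ℕ) (f : (Fin n → ZMod 2) → ZMod q)
    (u : Fin n → ZMod 2) : ℂ :=
  ∑ x : Fin n → ZMod 2, zetaQ q ^ (f x).val * (-1 : ℂ) ^ (∑ i, (u i * x i).val)

/-- The Walsh–Hadamard transform of a Boolean function `g : 𝔽₂ⁿ → 𝔽₂`. -/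
noncomputable def bWHT {n : ℕ} (g : (Fin n → ZMod 2) → ZMod 2)
    (u : Fin n → ZMod 2) : ℂ :=
  ∑ x : Fin n → ZMod 2, (-1 : ℂ) ^ (g x + ∑ i, u i * x i).val

/-- The `i`-th binary digit `a_i` of a function `f : 𝔽₂ⁿ → ℤ_{2^k}`. -/
def digit {n q : ℕ} (f : (Fin n → ZMod 2) → ZMod q) (i : ℕ)
    (x : Fin n → ZMod 2) : ZMod 2 :=
  (((f x).val / 2 ^ i : ℕ) : ZMod 2)

/-- The component function `f_c = c_0 a_0 ⊕ ⋯ ⊕ c_{k-2} a_{k-2} ⊕ a_{k-1}`. -/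
def comp {n k : ℕ} (f : (Fin n → ZMod 2) → ZMod (2 ^ k)) (c : Fin (k - 1) → ZMod 2)
    (x : Fin n → ZMod 2) : ZMod 2 :=
  (∑ j : Fin (k - 1), c j * digit f (j : ℕ) x) + digit f (k - 1) x

/-- The canonical bijection `ι : 𝔽₂^m → ℤ_{2^m}`. -/
def iotaF {m : ℕ} (d : Fin m → ZMod 2) : ZMod (2 ^ m) :=
  ∑ j : Fin m, ((d j).val : ZMod (2 ^ m)) * 2 ^ (j : ℕ)

/-- The inverse `ι⁻¹ : ℤ_{2^m} → 𝔽₂^m` of the canonical bijection. -/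
def invIota {m : ℕ} (g : ZMod (2 ^ m)) : Fin m → ZMod 2 :=
  fun j => ((g.val / 2 ^ (j : ℕ) : ℕ) : ZMod 2)

/-!
Let `ζ` be a primitive `2^k`-th root of unity and `Q = 2^(k-1)`. Both `H_f(u)` and `W_{f_c}(u)`
are images of the single element `α = ∑ₓ ζ^f(x) (-1)^(u·x)` of `𝓞 ℚ(ζ) = ℤ[ζ]`: the first under
the inclusion into `ℂ`, the second under the `ℤ`-linear form `Λ` sending `ζ^j` to `± 1`
according to the value of `f_c` on a point where `f` takes the value `j`; `Λ` exists because
both `ζ^j` and that sign change sign when `j` increases by `Q`.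

If `|H_f(u)|² = 2^t`, then `α ᾱ = 2^t`. As `ζ - 1` is a prime of `𝓞 ℚ(ζ)` associated to its
conjugate and `2 ~ (ζ - 1)^Q`, the element `α` is associated to `(1 - i)^t` with `i = ζ^(Q/2)`,
and the unit in between has absolute value `1` at every place, hence is a power of `ζ`.
Since `(1 - i)² = -2i`, this makes `α` equal to `±2^(t/2) ζ^j` for even `t` and to
`±2^((t-1)/2) (ζ^j - ζ^(j + Q/2))` for odd `t`, so `Λ α ∈ {0, ±2^⌈t/2⌉}`.
-/

open NumberField IsCMField
open scoped IntermediateField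

lemma ZMod.neg_one_pow_val_natCast {R : Type*} [Ring R] (n : ℕ) :
    (-1 : R) ^ (n : ZMod 2).val = (-1) ^ n := by
  rw [ZMod.val_natCast, ← neg_one_pow_eq_pow_mod_two]

lemma ZMod.neg_one_pow_val_add {R : Type*} [Ring R] (a b : ZMod 2) :
    (-1 : R) ^ (a + b).val = (-1) ^ a.val * (-1) ^ b.val := by
  rw [← pow_add, ← ZMod.neg_one_pow_val_natCast (a.val + b.val), Nat.cast_add,
    ZMod.natCast_zmod_val, ZMod.natCast_zmod_val]

lemma ZMod.neg_one_pow_val_sum {R ι : Type*} [Ring R] (s : Finset ι) (g : ι → ZMod 2) :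
    (-1 : R) ^ (∑ i ∈ s, g i).val = (-1) ^ (∑ i ∈ s, (g i).val) := by
  rw [← ZMod.neg_one_pow_val_natCast (∑ i ∈ s, (g i).val), Nat.cast_sum]
  simp only [ZMod.natCast_zmod_val]

def componentAt {k : ℕ} (c : Fin (k - 1) → ZMod 2) (j : ℕ) : ZMod 2 :=
  (∑ i : Fin (k - 1), c i * ((j / 2 ^ (i : ℕ) : ℕ) : ZMod 2)) + ((j / 2 ^ (k - 1) : ℕ) : ZMod 2)

lemma comp_apply_eq_componentAt {n k : ℕ} (f : (Fin n → ZMod 2) → ZMod (2 ^ k))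
    (c : Fin (k - 1) → ZMod 2) (x : Fin n → ZMod 2) : comp f c x = componentAt c (f x).val :=
  rfl

lemma componentAt_add_two_pow {k : ℕ} (c : Fin (k - 1) → ZMod 2) (j : ℕ) :
    componentAt c (j + 2 ^ (k - 1)) = componentAt c j + 1 := by
  have hlow (i : Fin (k - 1)) :
      (((j + 2 ^ (k - 1)) / 2 ^ (i : ℕ) : ℕ) : ZMod 2) = ((j / 2 ^ (i : ℕ) : ℕ) : ZMod 2) := by
    have hsplit : 2 ^ (k - 1) = 2 * 2 ^ (k - 1 - i - 1) * 2 ^ (i : ℕ) := by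
      rw [← pow_succ', ← pow_add]; congr 1; omega
    rw [hsplit, Nat.add_mul_div_right _ _ (by positivity), Nat.cast_add, Nat.cast_mul,
      ZMod.natCast_self, zero_mul, add_zero]
  have htop : (j + 2 ^ (k - 1)) / 2 ^ (k - 1) = j / 2 ^ (k - 1) + 1 :=
    Nat.add_div_right _ (by positivity)
  simp only [componentAt, hlow, htop, Nat.cast_add, Nat.cast_one, add_assoc]

lemma antiperiodic_neg_one_pow_componentAt {k : ℕ} (c : Fin (k - 1) → ZMod 2) :
    Function.Antiperiodic (fun j ↦ (-1 : ℤ) ^ (componentAt c j).val) (2 ^ (k - 1)) := by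
  intro j
  simp [componentAt_add_two_pow, ZMod.neg_one_pow_val_add, ZMod.val_one]

def gWHTAt {n q : ℕ} {R : Type*} [Ring R] (f : (Fin n → ZMod 2) → ZMod q)
    (u : Fin n → ZMod 2) (z : R) : R :=
  ∑ x : Fin n → ZMod 2, z ^ (f x).val * (-1 : R) ^ (∑ i, (u i * x i).val)

lemma gWHT_eq_gWHTAt {n q : ℕ} (f : (Fin n → ZMod 2) → ZMod q) (u : Fin n → ZMod 2) :
    gWHT q f u = gWHTAt f u (zetaQ q) :=
  rfl

lemma map_gWHTAt {n q : ℕ} {R S F : Type*} [Ring R] [Ring S] [FunLike F R S] [RingHomClass F R S]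
    (φ : F) (f : (Fin n → ZMod 2) → ZMod q) (u : Fin n → ZMod 2) (z : R) :
    φ (gWHTAt f u z) = gWHTAt f u (φ z) := by
  simp [gWHTAt]

lemma bWHT_comp_eq {n k : ℕ} {R : Type*} [CommRing R] (f : (Fin n → ZMod 2) → ZMod (2 ^ k))
    (c : Fin (k - 1) → ZMod 2) (u : Fin n → ZMod 2) (Λ : R →ₗ[ℤ] ℤ) (z : R)
    (hΛ : ∀ j, Λ (z ^ j) = (-1) ^ (componentAt c j).val) :
    bWHT (comp f c) u = Λ (gWHTAt f u z) := by
  simp only [bWHT, gWHTAt, map_sum, Int.cast_sum]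
  refine Finset.sum_congr rfl fun x _ ↦ ?_
  have hsign : z ^ (f x).val * (-1 : R) ^ (∑ i, (u i * x i).val)
      = ((-1 : ℤ) ^ (∑ i, (u i * x i).val)) • z ^ (f x).val := by
    rw [zsmul_eq_mul, mul_comm]; push_cast; rfl
  rw [hsign, map_zsmul, hΛ, smul_eq_mul, ZMod.neg_one_pow_val_add, ZMod.neg_one_pow_val_sum,
    comp_apply_eq_componentAt]
  push_cast
  ring

lemma PowerBasis.exists_linearMap_gen_pow {R S : Type*} [CommRing R] [Ring S] [Nontrivial S]
    [Algebra R S] (pb : PowerBasis R S) (hgen : pb.gen ^ pb.dim = -1) (ε : ℕ → R)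
    (hε : Function.Antiperiodic ε pb.dim) :
    ∃ Λ : S →ₗ[R] R, ∀ j, Λ (pb.gen ^ j) = ε j := by
  refine ⟨pb.basis.constr R fun i ↦ ε i, fun j ↦ ?_⟩
  induction j using Nat.strong_induction_on with
  | _ j ih =>
    by_cases hj : j < pb.dim
    · rw [← pb.basis_eq_pow ⟨j, hj⟩, Module.Basis.constr_basis]
    · obtain ⟨i, rfl⟩ : ∃ i, j = i + pb.dim := ⟨j - pb.dim, by omega⟩
      rw [pow_add, hgen, mul_neg_one, map_neg, ih i (by have := pb.dim_pos; omega), hε]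

section CMField

variable {K : Type*} [Field K] [NumberField K] [IsCMField K]

local notation "conj" => ringOfIntegersComplexConj K

lemma complexConj_mul_self_of_pow_eq_one {x : 𝓞 K} {n : ℕ} (hn : n ≠ 0) (hx : x ^ n = 1) :
    conj x * x = 1 := by
  let φ : K →+* ℂ := Classical.choice inferInstance
  have hφx : ‖φ x‖ = 1 :=
    Complex.norm_eq_one_of_pow_eq_one (by rw [← map_pow]; norm_cast; simp [hx]) hn
  apply RingOfIntegers.coe_injective
  apply φ.injective
  simp [complexEmbedding_complexConj, Complex.conj_mul', hφx]

lemma mul_complexConj_eq_two_pow_of_norm_sq (φ : K →+* ℂ) {α : 𝓞 K} {t : ℕ}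
    (h : ‖φ α‖ ^ 2 = 2 ^ t) : α * conj α = 2 ^ t := by
  apply RingOfIntegers.coe_injective
  apply φ.injective
  have h' : ((‖φ α‖ : ℂ)) ^ 2 = 2 ^ t := by exact_mod_cast h
  simp [complexEmbedding_complexConj, Complex.mul_conj', h', map_ofNat]

end CMField

lemma Prime.eq_of_associated_pow {M : Type*} [CommMonoidWithZero M] [IsCancelMulZero M] {p : M}
    (hp : Prime p) {m n : ℕ} (h : Associated (p ^ m) (p ^ n)) : m = n :=
  le_antisymm ((pow_dvd_pow_iff hp.ne_zero hp.not_isUnit).1 h.dvd)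
    ((pow_dvd_pow_iff hp.ne_zero hp.not_isUnit).1 h.symm.dvd)

section TwoPowerCyclotomic

variable {K : Type*} [Field K] {k : ℕ} {ζ : K} (hζ : IsPrimitiveRoot ζ (2 ^ (k + 2)))

local notation "conj" => ringOfIntegersComplexConj K

lemma IsPrimitiveRoot.toInteger_pow_two_pow_succ : hζ.toInteger ^ 2 ^ (k + 1) = -1 := by
  have h2 : IsPrimitiveRoot (hζ.toInteger ^ 2 ^ (k + 1)) 2 := by
    simpa [pow_succ] using hζ.toInteger_isPrimitiveRoot.pow_of_dvd (p := 2 ^ (k + 1))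
      (by positivity) (pow_dvd_pow 2 (by omega))
  exact h2.eq_neg_one_of_two_right

lemma IsPrimitiveRoot.toInteger_pow_two_pow_sq : (hζ.toInteger ^ 2 ^ k) ^ 2 = -1 := by
  rw [← pow_mul, ← pow_succ, hζ.toInteger_pow_two_pow_succ]

lemma IsPrimitiveRoot.associated_zeta_sub_one_pow_two [NumberField K]
    [IsCyclotomicExtension {2 ^ (k + 2)} ℚ K] :
    Associated ((hζ.toInteger - 1) ^ 2 ^ (k + 1)) (2 : 𝓞 K) := by
  -- the library states this for exponents of the syntactic form `k + 1 + 1`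
  have : IsCyclotomicExtension {2 ^ (k + 1 + 1)} ℚ K := ‹_›
  have h := IsCyclotomicExtension.Rat.map_eq_span_zeta_sub_one_pow 2 (k + 1) hζ
  have hrank : Module.finrank ℚ K = 2 ^ (k + 1) := by
    rw [IsCyclotomicExtension.finrank (n := 2 ^ (k + 2)) K
      (Polynomial.cyclotomic.irreducible_rat (by positivity)),
      Nat.totient_prime_pow_succ Nat.prime_two]
    simp
  rw [hrank, Ideal.map_span, Set.image_singleton, Ideal.span_singleton_pow,
    Ideal.span_singleton_eq_span_singleton] at h
  simpa using h.symm

variable [NumberField K] [IsCMField K]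

lemma IsPrimitiveRoot.associated_complexConj_zeta_sub_one :
    Associated (conj (hζ.toInteger - 1)) (hζ.toInteger - 1) := by
  refine ⟨(hζ.toInteger_isPrimitiveRoot.isUnit (NeZero.ne _)).neg.unit, ?_⟩
  simp only [map_sub, map_one, IsUnit.unit_spec]
  linear_combination
    -complexConj_mul_self_of_pow_eq_one (NeZero.ne _) hζ.toInteger_isPrimitiveRoot.pow_eq_one

lemma IsPrimitiveRoot.one_sub_mul_complexConj :
    (1 - hζ.toInteger ^ 2 ^ k) * conj (1 - hζ.toInteger ^ 2 ^ k) = 2 := by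
  have hsq := hζ.toInteger_pow_two_pow_sq
  have hconj := complexConj_mul_self_of_pow_eq_one (x := hζ.toInteger ^ 2 ^ k) four_ne_zero
    (by rw [show 4 = 2 * 2 by rfl, pow_mul, hsq]; norm_num)
  rw [map_sub, map_one]
  linear_combination (1 + hζ.toInteger ^ 2 ^ k) * hconj - conj (hζ.toInteger ^ 2 ^ k) * hsq

variable [IsCyclotomicExtension {2 ^ (k + 2)} ℚ K]

lemma IsPrimitiveRoot.associated_zeta_sub_one_pow_of_mul_complexConj {α : 𝓞 K} {t : ℕ}
    (h : α * conj α = 2 ^ t) : Associated α ((hζ.toInteger - 1) ^ (2 ^ k * t)) := by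
  have : IsCyclotomicExtension {2 ^ (k + 1 + 1)} ℚ K := ‹_›
  have hπ : Prime (hζ.toInteger - 1) := hζ.zeta_sub_one_prime_of_two_pow
  have h2t : Associated ((hζ.toInteger - 1) ^ (2 ^ (k + 1) * t)) ((2 : 𝓞 K) ^ t) := by
    rw [pow_mul]
    exact hζ.associated_zeta_sub_one_pow_two.pow_pow
  obtain ⟨i, -, hi⟩ := (dvd_prime_pow hπ _).1 ((Dvd.intro _ h).trans h2t.symm.dvd)
  have hconj : Associated (conj α) ((hζ.toInteger - 1) ^ i) := by
    have := hi.map conj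
    rw [map_pow] at this
    exact this.trans hζ.associated_complexConj_zeta_sub_one.pow_pow
  have hi2 : 2 * i = 2 ^ (k + 1) * t := by
    refine hπ.eq_of_associated_pow ?_
    rw [two_mul, pow_add]
    exact (hi.mul_mul hconj).symm.trans (h ▸ h2t.symm)
  rwa [show i = 2 ^ k * t by rw [pow_succ] at hi2; linarith] at hi

lemma IsPrimitiveRoot.associated_one_sub_pow_of_mul_complexConj {α : 𝓞 K} {t : ℕ}
    (h : α * conj α = 2 ^ t) : Associated α ((1 - hζ.toInteger ^ 2 ^ k) ^ t) := by
  have hl := hζ.associated_zeta_sub_one_pow_of_mul_complexConj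
    (hζ.one_sub_mul_complexConj.trans (pow_one 2).symm)
  rw [mul_one] at hl
  have hα := hζ.associated_zeta_sub_one_pow_of_mul_complexConj h
  rw [pow_mul] at hα
  exact hα.trans hl.symm.pow_pow

lemma IsPrimitiveRoot.exists_eq_pow_of_mul_complexConj_eq_one {u : 𝓞 K} (h : u * conj u = 1) :
    ∃ e, u = hζ.toInteger ^ e := by
  obtain ⟨v, rfl⟩ := IsUnit.of_mul_eq_one _ h
  have htors : v ∈ Units.torsion K := by
    refine (Units.mem_torsion K).2 fun w ↦ ?_
    have hw : w (v : K) * w (v : K) = 1 := by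
      simpa [infinitePlace_complexConj] using congrArg (fun x : 𝓞 K ↦ w (x : K)) h
    nlinarith [apply_nonneg w (v : K)]
  have hpow : (v : 𝓞 K) ^ 2 ^ (k + 2) = 1 := by
    have := pow_card_eq_one' (x := (⟨v, htors⟩ : Units.torsion K))
    rw [← Units.torsionOrder, IsCyclotomicExtension.Rat.torsionOrder_eq (n := 2 ^ (k + 2)),
      if_pos (by simp [Nat.even_pow])] at this
    simpa using congrArg (fun x : Units.torsion K ↦ ((x : (𝓞 K)ˣ) : 𝓞 K)) this
  obtain ⟨e, -, he⟩ := hζ.toInteger_isPrimitiveRoot.eq_pow_of_pow_eq_one hpow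
  exact ⟨e, he.symm⟩

lemma IsPrimitiveRoot.exists_eq_one_sub_pow_mul_pow_of_mul_complexConj {α : 𝓞 K} {t : ℕ}
    (h : α * conj α = 2 ^ t) : ∃ e, α = (1 - hζ.toInteger ^ 2 ^ k) ^ t * hζ.toInteger ^ e := by
  obtain ⟨u, hu⟩ := (hζ.associated_one_sub_pow_of_mul_complexConj h).symm
  have hu1 : (u : 𝓞 K) * conj (u : 𝓞 K) = 1 := by
    refine mul_left_cancel₀ (pow_ne_zero t two_ne_zero) ?_
    calc (2 : 𝓞 K) ^ t * (u * conj (u : 𝓞 K))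
        = ((1 - hζ.toInteger ^ 2 ^ k) * conj (1 - hζ.toInteger ^ 2 ^ k)) ^ t
          * (u * conj (u : 𝓞 K)) := by rw [hζ.one_sub_mul_complexConj]
      _ = α * conj α := by rw [← hu, map_mul, map_pow, mul_pow]; ring
      _ = 2 ^ t * 1 := by rw [h, mul_one]
  obtain ⟨e, he⟩ := hζ.exists_eq_pow_of_mul_complexConj_eq_one hu1
  exact ⟨e, by rw [← hu, he]⟩

lemma IsPrimitiveRoot.eq_zero_or_abs_eq_two_pow (Λ : 𝓞 K →ₗ[ℤ] ℤ)
    (hΛ : ∀ j, Λ (hζ.toInteger ^ j) = 1 ∨ Λ (hζ.toInteger ^ j) = -1) {α : 𝓞 K} {t : ℕ}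
    (h : α * conj α = 2 ^ t) : Λ α = 0 ∨ |Λ α| = 2 ^ ((t + 1) / 2) := by
  obtain ⟨e, rfl⟩ := hζ.exists_eq_one_sub_pow_mul_pow_of_mul_complexConj h
  set z := hζ.toInteger
  have hsq : (1 - z ^ 2 ^ k) ^ 2 = -2 * z ^ 2 ^ k := by
    linear_combination hζ.toInteger_pow_two_pow_sq
  obtain ⟨p, rfl | rfl⟩ := Nat.even_or_odd' t
  · have hα : (1 - z ^ 2 ^ k) ^ (2 * p) * z ^ e = ((-2) ^ p : ℤ) • z ^ (2 ^ k * p + e) := by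
      rw [pow_mul, hsq, zsmul_eq_mul, pow_add, pow_mul]
      push_cast
      ring
    rw [hα, map_zsmul, smul_eq_mul, show (2 * p + 1) / 2 = p by omega]
    rcases hΛ (2 ^ k * p + e) with h1 | h1 <;> simp [h1]
  · have hα : (1 - z ^ 2 ^ k) ^ (2 * p + 1) * z ^ e
        = ((-2) ^ p : ℤ) • (z ^ (2 ^ k * p + e) - z ^ (2 ^ k * p + e + 2 ^ k)) := by
      rw [pow_succ, pow_mul, hsq, zsmul_eq_mul, pow_add, pow_add, pow_mul]
      push_cast
      ring
    rw [hα, map_zsmul, smul_eq_mul, map_sub, show (2 * p + 1 + 1) / 2 = p + 1 by omega]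
    rcases hΛ (2 ^ k * p + e) with h1 | h1 <;> rcases hΛ (2 ^ k * p + e + 2 ^ k) with h2 | h2 <;>
      simp [h1, h2, abs_mul, pow_succ]

end TwoPowerCyclotomic

lemma IsPrimitiveRoot.isCyclotomicExtension_adjoin_simple {F L : Type*} [Field F]
    [Field L] [Algebra F L] {n : ℕ} [NeZero n] {ζ : L} (hζ : IsPrimitiveRoot ζ n) :
    IsCyclotomicExtension {n} F F⟮ζ⟯ := by
  change IsCyclotomicExtension _ F F⟮ζ⟯.toSubalgebra
  rw [IntermediateField.adjoin_simple_toSubalgebra_of_isAlgebraic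
    ((hζ.isIntegral (NeZero.pos n)).tower_top (A := F)).isAlgebraic]
  exact hζ.adjoin_isCyclotomicExtension F

lemma isPrimitiveRoot_zetaQ (q : ℕ) [NeZero q] : IsPrimitiveRoot (zetaQ q) q := by
  simpa [zetaQ] using Complex.isPrimitiveRoot_exp q (NeZero.ne q)

lemma bWHT_comp_eq_zero_or_norm_eq {n k : ℕ} (f : (Fin n → ZMod 2) → ZMod (2 ^ (k + 2)))
    (c : Fin (k + 2 - 1) → ZMod 2) (u : Fin n → ZMod 2) {t : ℕ}
    (hf : gWHT (2 ^ (k + 2)) f u = 0 ∨ ‖gWHT (2 ^ (k + 2)) f u‖ ^ 2 = 2 ^ t) :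
    bWHT (comp f c) u = 0 ∨ ‖bWHT (comp f c) u‖ = 2 ^ ((t + 1) / 2) := by
  have hζ := isPrimitiveRoot_zetaQ (2 ^ (k + 2))
  let K := ℚ⟮zetaQ (2 ^ (k + 2))⟯
  have : IsCyclotomicExtension {2 ^ (k + 2)} ℚ K := hζ.isCyclotomicExtension_adjoin_simple
  have := IsCyclotomicExtension.numberField {2 ^ (k + 2)} ℚ K
  have := IsCyclotomicExtension.Rat.isCMField K (S := {2 ^ (k + 2)})
    ⟨_, rfl, by have := Nat.one_le_two_pow (n := k); rw [pow_add]; omega⟩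
  have hζK : IsPrimitiveRoot (IntermediateField.AdjoinSimple.gen ℚ (zetaQ (2 ^ (k + 2))))
      (2 ^ (k + 2)) := IsPrimitiveRoot.coe_submonoidClass_iff.1 hζ
  have hdim : hζK.integralPowerBasis.dim = 2 ^ (k + 1) := by
    rw [IsPrimitiveRoot.integralPowerBasis_dim, Nat.totient_prime_pow Nat.prime_two (by omega)]
    simp
  obtain ⟨Λ, hΛ⟩ := hζK.integralPowerBasis.exists_linearMap_gen_pow
    (by rw [hdim, IsPrimitiveRoot.integralPowerBasis_gen]; exact hζK.toInteger_pow_two_pow_succ)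
    _ (by rw [hdim]; exact antiperiodic_neg_one_pow_componentAt c)
  rw [IsPrimitiveRoot.integralPowerBasis_gen] at hΛ
  rw [bWHT_comp_eq f c u Λ hζK.toInteger hΛ, Complex.norm_intCast]
  set α := gWHTAt f u hζK.toInteger
  have hα : algebraMap K ℂ (α : K) = gWHT (2 ^ (k + 2)) f u := by
    rw [gWHT_eq_gWHTAt, ← RingHom.comp_apply, map_gWHTAt]
    rfl
  rcases hf with h0 | h2
  · have : α = 0 := by
      apply RingOfIntegers.coe_injective
      apply (algebraMap K ℂ).injective
      simpa [hα] using h0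
    simp [this]
  · have hconj := mul_complexConj_eq_two_pow_of_norm_sq (algebraMap K ℂ) (α := α) (by rwa [hα])
    rcases hζK.eq_zero_or_abs_eq_two_pow Λ (fun j ↦ hΛ j ▸ neg_one_pow_eq_or ℤ _) hconj with h | h
    · simp [h]
    · right
      exact_mod_cast h

lemma two_rpow_natCast_div_two_of_even {N : ℕ} (h : Even N) :
    (2 : ℝ) ^ ((N : ℝ) / 2) = 2 ^ (N / 2) := by
  obtain ⟨p, rfl⟩ := h
  rw [show ((p + p : ℕ) : ℝ) / 2 = p by push_cast; ring, Real.rpow_natCast,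
    show (p + p) / 2 = p by omega]

lemma sq_two_rpow_natCast_div_two (N : ℕ) : ((2 : ℝ) ^ ((N : ℝ) / 2)) ^ 2 = 2 ^ N := by
  rw [← Real.rpow_natCast _ 2, ← Real.rpow_mul zero_le_two, Nat.cast_ofNat,
    div_mul_cancel₀ _ two_ne_zero, Real.rpow_natCast]

theorem stmt7_general (n k s : ℕ) (hk : 2 ≤ k)
    (f : (Fin n → ZMod 2) → ZMod (2 ^ k))
    (hf : ∀ u, ‖gWHT (2 ^ k) f u‖ = 0 ∨
      ‖gWHT (2 ^ k) f u‖ = (2 : ℝ) ^ (((n + s : ℕ) : ℝ) / 2)) :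
    ∀ (c : Fin (k - 1) → ZMod 2) (u : Fin n → ZMod 2),
      (Even (n + s) →
        ‖bWHT (comp f c) u‖ = 0 ∨
        ‖bWHT (comp f c) u‖ = (2 : ℝ) ^ (((n + s : ℕ) : ℝ) / 2)) ∧
      (¬ Even (n + s) →
        ‖bWHT (comp f c) u‖ = 0 ∨
        ‖bWHT (comp f c) u‖ = (2 : ℝ) ^ (((n + s + 1 : ℕ) : ℝ) / 2)) := by
  intro c u
  obtain ⟨k, rfl⟩ : ∃ m, k = m + 2 := ⟨k - 2, by omega⟩
  have key := bWHT_comp_eq_zero_or_norm_eq f c u (t := n + s)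
    ((hf u).imp norm_eq_zero.1 fun h ↦ by rw [h, sq_two_rpow_natCast_div_two])
  rw [← norm_eq_zero] at key
  refine ⟨fun he ↦ ?_, fun ho ↦ ?_⟩
  · rwa [two_rpow_natCast_div_two_of_even he,
      show (n + s) / 2 = (n + s + 1) / 2 by obtain ⟨p, hp⟩ := he; omega]
  · rwa [two_rpow_natCast_div_two_of_even (Nat.not_even_iff_odd.1 ho).add_one]

/-- Corollary 6, one direction: if `f : 𝔽₂ⁿ → ℤ_{2^k}` is `s`-plateaued,
then every component `f_c` is `s`-plateaued if `n + s` is even, and `(s+1)`-plateaued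
if `n + s` is odd. -/
theorem stmt7 (n k s : ℕ) (hn : 1 ≤ n) (hk : 2 ≤ k)
    (f : (Fin n → ZMod 2) → ZMod (2 ^ k))
    (hf : ∀ u, ‖gWHT (2 ^ k) f u‖ = 0 ∨
      ‖gWHT (2 ^ k) f u‖ = (2 : ℝ) ^ (((n + s : ℕ) : ℝ) / 2)) :
    ∀ (c : Fin (k - 1) → ZMod 2) (u : Fin n → ZMod 2),
      (Even (n + s) →
        ‖bWHT (comp f c) u‖ = 0 ∨
        ‖bWHT (comp f c) u‖ = (2 : ℝ) ^ (((n + s : ℕ) : ℝ) / 2)) ∧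
      (¬ Even (n + s) →
        ‖bWHT (comp f c) u‖ = 0 ∨
        ‖bWHT (comp f c) u‖ = (2 : ℝ) ^ (((n + s + 1 : ℕ) : ℝ) / 2)) :=
  stmt7_general n k s hk f hf
end

section
/- Let n ≥ 1, k ≥ 1, q = 2^k, and let f : 𝔽₂ⁿ → ℤ_q be a generalized Boolean function. Then for every x ∈ 𝔽₂ⁿ, Σ_{a,b ∈ 𝔽₂ⁿ} ζ^{D_b D_a f(x)} = 2^{−n} · ζ^{f(x)} · Σ_{d ∈ 𝔽₂ⁿ} |H_f(d)|² · conj(H_f(d)) · (−1)^{x·d}, where conj denotes complex conjugation. -/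
/-! Write `ψ = ζ^{(·)}` for the standard additive character of `ℤ_q` and `F = ψ ∘ f`. The summand
`ζ^{D_b D_a f(x)}` factors as `F(x) · conj F(x+a) · conj F(x+b) · F(x+a+b)`, and substituting
`z = x + a`, `w = x + b` (so that `x + a + b = x + z + w` in characteristic two) turns the left side
into `F(x) · Σ_{z,w} F(x+z+w) conj F(z) conj F(w)`. On the right, `|H(d)|² conj H(d)` expands into a
triple sum over `y, z, w` of `F(y) conj F(z) conj F(w) (-1)^{d·(y+z+w)}`; summing the Walsh characters
over `d` keeps only `y = x + z + w`, giving `2ⁿ` times the same double sum. -/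

open scoped BigOperators

open scoped ComplexConjugate

lemma zetaQ_pow_val (q : ℕ) [NeZero q] (u : ZMod q) : zetaQ q ^ u.val = ZMod.stdAddChar u := by
  rw [ZMod.stdAddChar_apply, ZMod.toCircle_apply, zetaQ, ← Complex.exp_nat_mul]
  ring_nf

noncomputable def walshChar {n : ℕ} (u : Fin n → ZMod 2) : AddChar (Fin n → ZMod 2) ℂ :=
  ZMod.stdAddChar.compAddMonoidHom (AddMonoidHom.mk' (u ⬝ᵥ ·) (dotProduct_add u))

section WalshChar

variable {n : ℕ}

lemma walshChar_apply (u x : Fin n → ZMod 2) :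
    walshChar u x = (-1 : ℂ) ^ (∑ i, (u i * x i).val) := by
  set m := ∑ i, (u i * x i).val
  have hm : ((m : ℤ) : ZMod 2) = u ⬝ᵥ x := by
    push_cast [m, ZMod.natCast_zmod_val]
    rfl
  rw [walshChar, AddChar.compAddMonoidHom_apply, AddMonoidHom.mk'_apply, ← hm,
    ZMod.stdAddChar_coe, ← Complex.exp_pi_mul_I, ← Complex.exp_nat_mul]
  push_cast
  ring_nf

lemma walshChar_comm (u x : Fin n → ZMod 2) : walshChar u x = walshChar x u := by
  simp only [walshChar, AddChar.compAddMonoidHom_apply, AddMonoidHom.mk'_apply, dotProduct_comm u x]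

lemma conj_walshChar (u x : Fin n → ZMod 2) : conj (walshChar u x) = walshChar u x := by
  rw [← AddChar.map_neg_eq_conj, ZModModule.neg_eq_self]

lemma walshChar_eq_zero_iff (u : Fin n → ZMod 2) : walshChar u = 0 ↔ u = 0 := by
  refine ⟨fun h => ?_, fun h => ?_⟩
  · by_contra hu
    obtain ⟨i, hi⟩ := Function.ne_iff.mp hu
    have hui : u i = 1 := by
      have h2 : ∀ t : ZMod 2, t ≠ 0 → t = 1 := by decide
      exact h2 _ hi
    have := DFunLike.congr_fun h (Pi.single i 1)
    rw [walshChar, AddChar.compAddMonoidHom_apply, AddMonoidHom.mk'_apply, dotProduct_single, hui,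
      mul_one, AddChar.zero_apply, ← AddChar.map_zero_eq_one (ZMod.stdAddChar (N := 2)),
      ZMod.injective_stdAddChar.eq_iff] at this
    exact one_ne_zero this
  · ext x
    simp [walshChar, h]

lemma sum_walshChar (v : Fin n → ZMod 2) :
    ∑ d, walshChar d v = if v = 0 then (2 : ℂ) ^ n else 0 := by
  simp only [walshChar_comm _ v, AddChar.sum_eq_ite, walshChar_eq_zero_iff, Fintype.card_fun,
    ZMod.card, Fintype.card_fin]
  push_cast
  rfl

end WalshChar

section WalshTransform

variable {n : ℕ}

noncomputable def walshTransform (F : (Fin n → ZMod 2) → ℂ) (u : Fin n → ZMod 2) : ℂ :=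
  ∑ x, F x * walshChar u x

lemma gWHT_eq_walshTransform {q : ℕ} [NeZero q] (f : (Fin n → ZMod 2) → ZMod q) :
    gWHT q f = walshTransform (fun x => ZMod.stdAddChar (f x)) := by
  ext u
  simp only [gWHT, walshTransform, zetaQ_pow_val, walshChar_apply]

lemma conj_walshTransform (F : (Fin n → ZMod 2) → ℂ) (u : Fin n → ZMod 2) :
    conj (walshTransform F u) = ∑ x, conj (F x) * walshChar u x := by
  simp only [walshTransform, map_sum, map_mul, conj_walshChar]

lemma sum_mul_sum_walshChar_add (G : (Fin n → ZMod 2) → ℂ) (s : Fin n → ZMod 2) :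
    ∑ y, G y * ∑ d, walshChar d (y + s) = 2 ^ n * G s := by
  simp only [sum_walshChar, add_eq_zero_iff_eq_neg, ZModModule.neg_eq_self, mul_ite, mul_zero,
    Finset.sum_ite_eq', Finset.mem_univ, if_true, mul_comm]

lemma sum_sq_norm_mul_conj_walshTransform_mul_walshChar (F : (Fin n → ZMod 2) → ℂ)
    (x : Fin n → ZMod 2) :
    ∑ d, ((‖walshTransform F d‖ ^ 2 : ℝ) : ℂ) * conj (walshTransform F d) * walshChar x d
      = 2 ^ n * ∑ z, ∑ w, F (x + (z + w)) * conj (F z) * conj (F w) := by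
  have expand : ∀ d,
      ((‖walshTransform F d‖ ^ 2 : ℝ) : ℂ) * conj (walshTransform F d) * walshChar x d
        = ∑ z, ∑ w, ∑ y, F y * conj (F z) * conj (F w) * walshChar d (y + (x + (z + w))) := by
    intro d
    rw [Complex.ofReal_pow, ← Complex.mul_conj', conj_walshTransform, walshTransform,
      walshChar_comm]
    simp only [Finset.sum_mul, Finset.mul_sum, AddChar.map_add_eq_mul]
    refine Fintype.sum_congr _ _ fun z => Fintype.sum_congr _ _ fun w =>
      Fintype.sum_congr _ _ fun y => ?_
    ring
  calc ∑ d, ((‖walshTransform F d‖ ^ 2 : ℝ) : ℂ) * conj (walshTransform F d) * walshChar x d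
      = ∑ z, ∑ w, ∑ y,
          F y * conj (F z) * conj (F w) * ∑ d, walshChar d (y + (x + (z + w))) := by
        simp only [expand, Finset.mul_sum]
        rw [Finset.sum_comm]
        refine Fintype.sum_congr _ _ fun z => ?_
        rw [Finset.sum_comm]
        refine Fintype.sum_congr _ _ fun w => ?_
        rw [Finset.sum_comm]
    _ = 2 ^ n * ∑ z, ∑ w, F (x + (z + w)) * conj (F z) * conj (F w) := by
        rw [Finset.mul_sum]
        refine Fintype.sum_congr _ _ fun z => ?_
        rw [Finset.mul_sum]
        exact Fintype.sum_congr _ _ fun w =>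
          sum_mul_sum_walshChar_add (fun y => F y * conj (F z) * conj (F w)) _

end WalshTransform

lemma sum_addChar_secondDeriv {V A : Type*} [AddCommGroup V] [Module (ZMod 2) V] [Fintype V]
    [AddCommGroup A] [Finite A] (ψ : AddChar A ℂ) (f : V → A) (x : V) :
    ∑ a, ∑ b, ψ (f x - f (x + a) - f (x + b) + f (x + a + b))
      = ψ (f x) * ∑ z, ∑ w, ψ (f (x + (z + w))) * conj (ψ (f z)) * conj (ψ (f w)) := by
  have split : ∀ a b, ψ (f x - f (x + a) - f (x + b) + f (x + a + b))
      = ψ (f x) * (ψ (f (x + a + b)) * conj (ψ (f (x + a))) * conj (ψ (f (x + b)))) := by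
    intro a b
    rw [← AddChar.map_neg_eq_conj, ← AddChar.map_neg_eq_conj, ← AddChar.map_add_eq_mul,
      ← AddChar.map_add_eq_mul, ← AddChar.map_add_eq_mul]
    abel_nf
  simp only [split, ← Finset.mul_sum]
  congr 1
  refine Fintype.sum_equiv (Equiv.addLeft x) _ _ fun a =>
    Fintype.sum_equiv (Equiv.addLeft x) _ _ fun b => ?_
  rw [Equiv.coe_addLeft, add_add_add_comm, ZModModule.add_self, zero_add, add_assoc]

theorem stmt18_general (n k : ℕ)
    (f : (Fin n → ZMod 2) → ZMod (2 ^ k)) :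
    ∀ x : Fin n → ZMod 2,
      ∑ a : Fin n → ZMod 2, ∑ b : Fin n → ZMod 2,
        zetaQ (2 ^ k) ^ (f x - f (fun i => x i + a i) - f (fun i => x i + b i) +
          f (fun i => x i + a i + b i)).val
      = ((2 : ℂ) ^ n)⁻¹ * zetaQ (2 ^ k) ^ (f x).val *
          ∑ d : Fin n → ZMod 2,
            ((‖gWHT (2 ^ k) f d‖ ^ 2 : ℝ) : ℂ) *
              (starRingEnd ℂ) (gWHT (2 ^ k) f d) *
              (-1 : ℂ) ^ (∑ i, (x i * d i).val) := by
  intro x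
  simp only [zetaQ_pow_val, gWHT_eq_walshTransform, ← walshChar_apply]
  rw [sum_sq_norm_mul_conj_walshTransform_mul_walshChar]
  refine (sum_addChar_secondDeriv ZMod.stdAddChar f x).trans ?_
  field_simp

/-- computation inside the proof of Theorem 11:
`Σ_{a,b} ζ^{D_b D_a f(x)} = 2^{−n}·ζ^{f(x)}·Σ_d |H_f(d)|²·conj(H_f(d))·(−1)^{x·d}`. -/
theorem stmt18 (n k : ℕ) (hn : 1 ≤ n) (hk : 1 ≤ k)
    (f : (Fin n → ZMod 2) → ZMod (2 ^ k)) :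
    ∀ x : Fin n → ZMod 2,
      ∑ a : Fin n → ZMod 2, ∑ b : Fin n → ZMod 2,
        zetaQ (2 ^ k) ^ (f x - f (fun i => x i + a i) - f (fun i => x i + b i) +
          f (fun i => x i + a i + b i)).val
      = ((2 : ℂ) ^ n)⁻¹ * zetaQ (2 ^ k) ^ (f x).val *
          ∑ d : Fin n → ZMod 2,
            ((‖gWHT (2 ^ k) f d‖ ^ 2 : ℝ) : ℂ) *
              (starRingEnd ℂ) (gWHT (2 ^ k) f d) *
              (-1 : ℂ) ^ (∑ i, (x i * d i).val) :=
  stmt18_general n k f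
end
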